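/- arXiv:2402.05108 — 5 statements merged into one kernel-verified Lean document; each statement's English description precedes it below -/
import Mathlib

section
/- Let k be a real number with k > 1, and let a, b be nonzero complex numbers with |a| = |b|. Let I be a connected component of the set {θ ∈ ℝ | Re(a·exp(i k θ)) > 0} and let J be a connected component of the set {θ ∈ ℝ | Re(b·exp(i k θ)) < 0}, and suppose I ∩ J is nonempty. Then I ∩ J is a nonempty bounded open interval, and its midpoint d = (sInf(I ∩ J) + sSup(I ∩ J))/2 satisfies that (b − a)·exp(i k d) is a negative real number; that is, d is a singular direction carrying a Stokes arrow from the exponent a z^k to the exponent b z^k. -/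
open Complex Set

/-- The set of directions `θ` in which the exponential `exp(a z^k)` grows along the ray
`z = r e^{iθ}`, i.e. where `Re(a · exp(i k θ)) > 0`. -/
def posDirections (a : ℂ) (k : ℝ) : Set ℝ :=
  {θ : ℝ | 0 < (a * Complex.exp (Complex.I * k * θ)).re}

/-- The set of directions `θ` in which the exponential `exp(a z^k)` decays along the ray
`z = r e^{iθ}`, i.e. where `Re(a · exp(i k θ)) < 0`. -/
def negDirections (a : ℂ) (k : ℝ) : Set ℝ :=
  {θ : ℝ | (a * Complex.exp (Complex.I * k * θ)).re < 0}

/-!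
Choose a direction `c` with `a · exp(i k c) = ‖a‖`. Then `Re(a · exp(i k θ)) = ‖a‖ cos(k (θ - c))`,
so each positive interval of `a z^k` is the open interval of length `π / k` centred at such a `c`;
the negative intervals of `b z^k` are the positive intervals of `-b z^k`. If `I` and `J`, centred
at `c` and `c'`, overlap, then `I ∩ J` is an open interval with midpoint `d = (c + c') / 2`, and
with `t = k (d - c)` one gets `(b - a) · exp(i k d) = -‖a‖ (e^{-it} + e^{it}) = -2 ‖a‖ cos t`,
which is negative because `d ∈ I` forces `|t| < π / 2`.
-/

open scoped Real

theorem connectedComponentIn_eq_Ioo {α : Type*} [ConditionallyCompleteLinearOrder α]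
    [TopologicalSpace α] [OrderTopology α] [DenselyOrdered α] {S : Set α} {x y z : α}
    (hz : z ∈ Ioo x y) (hsub : Ioo x y ⊆ S) (hx : x ∉ S) (hy : y ∉ S) :
    connectedComponentIn S z = Ioo x y := by
  refine subset_antisymm (fun w hw => ?_) (isPreconnected_Ioo.subset_connectedComponentIn hz hsub)
  have hord := (isPreconnected_connectedComponentIn (F := S) (x := z)).ordConnected
  have hzC : z ∈ connectedComponentIn S z := mem_connectedComponentIn (hsub hz)
  have hCS := connectedComponentIn_subset S z
  constructor
  · by_contra! h
    exact hx (hCS (hord.out hw hzC ⟨h, hz.1.le⟩))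
  · by_contra! h
    exact hy (hCS (hord.out hzC hw ⟨hz.2.le, h⟩))

theorem negDirections_eq_posDirections_neg (b : ℂ) (k : ℝ) :
    negDirections b k = posDirections (-b) k := by
  ext θ
  simp [negDirections, posDirections]

section

variable {a : ℂ} {k c : ℝ}

theorem ne_zero_of_mem_posDirections {θ : ℝ} (h : θ ∈ posDirections a k) : a ≠ 0 := by
  rintro rfl
  simp [posDirections] at h

theorem mul_exp_eq_norm_mul_exp (hc : a * exp (I * k * c) = ‖a‖) (θ : ℝ) :
    a * exp (I * k * θ) = ‖a‖ * exp ((k * (θ - c) : ℝ) * I) := by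
  rw [← hc, mul_assoc a, ← Complex.exp_add]
  congr 2
  push_cast
  ring

theorem re_mul_exp_eq_norm_mul_cos (hc : a * exp (I * k * c) = ‖a‖) (θ : ℝ) :
    (a * exp (I * k * θ)).re = ‖a‖ * Real.cos (k * (θ - c)) := by
  rw [mul_exp_eq_norm_mul_exp hc, re_ofReal_mul, exp_ofReal_mul_I_re]

theorem posDirections_eq_setOf_cos_pos (ha : a ≠ 0) (hc : a * exp (I * k * c) = ‖a‖) :
    posDirections a k = {θ | 0 < Real.cos (k * (θ - c))} := by
  ext θ
  simp only [posDirections, mem_ofPred_eq, re_mul_exp_eq_norm_mul_cos hc,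
    mul_pos_iff_of_pos_left (norm_pos_iff.mpr ha)]

theorem exists_mul_exp_eq_norm_of_mem_posDirections {θ₀ : ℝ} (hk : k ≠ 0)
    (hθ₀ : θ₀ ∈ posDirections a k) :
    ∃ c : ℝ, a * exp (I * k * c) = ‖a‖ ∧ |k * (θ₀ - c)| < π / 2 := by
  set z := a * exp (I * k * θ₀)
  have hφ : |z.arg| < π / 2 := abs_arg_lt_pi_div_two_iff.mpr (Or.inl hθ₀)
  refine ⟨θ₀ - z.arg / k, ?_, by rwa [sub_sub_cancel, mul_div_cancel₀ _ hk]⟩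
  have hz : ‖z‖ = ‖a‖ := by simp [z, norm_exp]
  calc a * exp (I * k * (θ₀ - z.arg / k : ℝ))
      = z * exp (-(z.arg * I)) := by
        rw [mul_assoc a, ← Complex.exp_add]
        congr 2
        have hk' : (k : ℂ) ≠ 0 := ofReal_ne_zero.mpr hk
        push_cast
        field_simp
        ring
    _ = ‖a‖ := by
        rw [← hz, Complex.exp_neg]
        nth_rw 1 [← norm_mul_exp_arg_mul_I z]
        rw [mul_assoc, mul_inv_cancel₀ (exp_ne_zero _), mul_one]

theorem abs_mul_sub_lt_pi_div_two_iff (hk : 0 < k) {θ : ℝ} :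
    |k * (θ - c)| < π / 2 ↔ θ ∈ Ioo (c - π / (2 * k)) (c + π / (2 * k)) := by
  rw [← Real.ball_eq_Ioo, Metric.mem_ball, Real.dist_eq, abs_mul, abs_of_pos hk,
    ← lt_div_iff₀' hk, div_div]

theorem connectedComponentIn_setOf_cos_pos {θ₀ : ℝ} (hk : 0 < k) (hθ₀ : |k * (θ₀ - c)| < π / 2) :
    connectedComponentIn {θ | 0 < Real.cos (k * (θ - c))} θ₀
      = Ioo (c - π / (2 * k)) (c + π / (2 * k)) := by
  have hend : ∀ θ, |k * (θ - c)| = π / 2 → θ ∉ {θ | 0 < Real.cos (k * (θ - c))} := by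
    intro θ h hpos
    rw [mem_ofPred_eq, ← Real.cos_abs, h, Real.cos_pi_div_two] at hpos
    exact hpos.false
  refine connectedComponentIn_eq_Ioo ((abs_mul_sub_lt_pi_div_two_iff hk).mp hθ₀)
    (fun θ hθ => ?_) (hend _ ?_) (hend _ ?_)
  · exact Real.cos_pos_of_mem_Ioo (abs_lt.mp ((abs_mul_sub_lt_pi_div_two_iff hk).mpr hθ))
  · rw [sub_sub_cancel_left, abs_mul, abs_neg, abs_of_pos hk, abs_of_pos (by positivity)]
    field_simp
  · rw [add_sub_cancel_left, abs_mul, abs_of_pos hk, abs_of_pos (by positivity)]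
    field_simp

theorem exists_connectedComponentIn_posDirections_eq_Ioo {θ₀ : ℝ} (hk : 0 < k)
    (hθ₀ : θ₀ ∈ posDirections a k) :
    ∃ c : ℝ, a * exp (I * k * c) = ‖a‖ ∧
      connectedComponentIn (posDirections a k) θ₀ = Ioo (c - π / (2 * k)) (c + π / (2 * k)) := by
  obtain ⟨c, hc, hθ₀c⟩ := exists_mul_exp_eq_norm_of_mem_posDirections hk.ne' hθ₀
  refine ⟨c, hc, ?_⟩
  rw [posDirections_eq_setOf_cos_pos (ne_zero_of_mem_posDirections hθ₀) hc]
  exact connectedComponentIn_setOf_cos_pos hk hθ₀c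

theorem add_div_two_mem_Ioo_of_Ioo_inter_Ioo_nonempty {c c' δ : ℝ}
    (h : (Ioo (c - δ) (c + δ) ∩ Ioo (c' - δ) (c' + δ)).Nonempty) :
    (c + c') / 2 ∈ Ioo (c - δ) (c + δ) := by
  obtain ⟨x, ⟨h₁, h₂⟩, h₃, h₄⟩ := h
  constructor <;> linarith

theorem sInf_add_sSup_Ioo_inter_Ioo {c c' δ : ℝ}
    (h : (Ioo (c - δ) (c + δ) ∩ Ioo (c' - δ) (c' + δ)).Nonempty) :
    sInf (Ioo (c - δ) (c + δ) ∩ Ioo (c' - δ) (c' + δ))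
      + sSup (Ioo (c - δ) (c + δ) ∩ Ioo (c' - δ) (c' + δ)) = c + c' := by
  rw [Ioo_inter_Ioo] at h ⊢
  rw [csInf_Ioo (nonempty_Ioo.mp h), csSup_Ioo (nonempty_Ioo.mp h), max_sub_sub_right,
    min_add_add_right]
  linarith [max_add_min c c']

theorem sub_mul_exp_midpoint {b : ℂ} {c' : ℝ} (hab : ‖a‖ = ‖b‖)
    (hc : a * exp (I * k * c) = ‖a‖) (hc' : -b * exp (I * k * c') = ‖-b‖) :
    (b - a) * exp (I * k * ((c + c') / 2 : ℝ))
      = (-(2 * ‖a‖ * Real.cos (k * ((c + c') / 2 - c))) : ℝ) := by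
  have hmid : k * ((c + c') / 2 - c') = -(k * ((c + c') / 2 - c)) := by ring
  rw [sub_mul, ← neg_neg b, neg_mul, mul_exp_eq_norm_mul_exp hc, mul_exp_eq_norm_mul_exp hc',
    norm_neg, ← hab, hmid]
  push_cast
  linear_combination (‖a‖ : ℂ) * Complex.two_cos (k * ((c + c') / 2 - c))

end

theorem stokes_arrow_of_interval_overlap_general
    (k : ℝ) (hk : 1 < k) (a b : ℂ)
    (hab : ‖a‖ = ‖b‖)
    (I J : Set ℝ)
    (hI : ∃ θ₀ ∈ posDirections a k, I = connectedComponentIn (posDirections a k) θ₀)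
    (hJ : ∃ θ₁ ∈ negDirections b k, J = connectedComponentIn (negDirections b k) θ₁)
    (hIJ : (I ∩ J).Nonempty) :
    (∃ x y : ℝ, x < y ∧ I ∩ J = Set.Ioo x y) ∧
      (∃ r : ℝ, r < 0 ∧
        (b - a) * Complex.exp (Complex.I * k * (((sInf (I ∩ J) + sSup (I ∩ J)) / 2 : ℝ))) = r) := by
  have hk₀ : 0 < k := by linarith
  obtain ⟨θ₀, hθ₀, rfl⟩ := hI
  obtain ⟨θ₁, hθ₁, rfl⟩ := hJ
  rw [negDirections_eq_posDirections_neg] at hθ₁ hIJ ⊢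
  obtain ⟨c, hc, hI⟩ := exists_connectedComponentIn_posDirections_eq_Ioo hk₀ hθ₀
  obtain ⟨c', hc', hJ⟩ := exists_connectedComponentIn_posDirections_eq_Ioo hk₀ hθ₁
  rw [hI, hJ] at hIJ ⊢
  refine ⟨⟨_, _, by rwa [Ioo_inter_Ioo, nonempty_Ioo] at hIJ, Ioo_inter_Ioo⟩,
    _, ?_, by rw [sInf_add_sSup_Ioo_inter_Ioo hIJ, sub_mul_exp_midpoint hab hc hc']⟩
  have ha : 0 < ‖a‖ := norm_pos_iff.mpr (ne_zero_of_mem_posDirections hθ₀)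
  have hcos : 0 < Real.cos (k * ((c + c') / 2 - c)) :=
    Real.cos_pos_of_mem_Ioo <| abs_lt.mp <| (abs_mul_sub_lt_pi_div_two_iff hk₀).mpr <|
      add_div_two_mem_Ioo_of_Ioo_inter_Ioo_nonempty hIJ
  exact neg_lt_zero.mpr (mul_pos (mul_pos two_pos ha) hcos)

/-- if a positive distinguished interval `I` of the exponent `a z^k` and a negative
distinguished interval `J` of the exponent `b z^k` (with `|a| = |b|`, `k > 1`) overlap, then
`I ∩ J` is a nonempty bounded open interval whose midpoint `d` is a singular direction carrying
a Stokes arrow from `a z^k` to `b z^k`, i.e. `(b - a)·exp(i k d)` is a negative real number. -/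
theorem stokes_arrow_of_interval_overlap
    (k : ℝ) (hk : 1 < k) (a b : ℂ) (ha : a ≠ 0) (hb : b ≠ 0)
    (hab : ‖a‖ = ‖b‖)
    (I J : Set ℝ)
    (hI : ∃ θ₀ ∈ posDirections a k, I = connectedComponentIn (posDirections a k) θ₀)
    (hJ : ∃ θ₁ ∈ negDirections b k, J = connectedComponentIn (negDirections b k) θ₁)
    (hIJ : (I ∩ J).Nonempty) :
    (∃ x y : ℝ, x < y ∧ I ∩ J = Set.Ioo x y) ∧
      (∃ r : ℝ, r < 0 ∧
        (b - a) * Complex.exp (Complex.I * k * (((sInf (I ∩ J) + sSup (I ∩ J)) / 2 : ℝ))) = r) :=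
  stokes_arrow_of_interval_overlap_general k hk a b hab I J hI hJ hIJ
end

section
/- Let τ be a nonzero complex number and let h(τ) be the 3×3 complex matrix !![0, 0, τ; 1, 0, 0; 0, 1, 0]. For s₁, …, s₁₀ ∈ ℂ let S₁ = 1 + s₁E₃₁, S₂ = 1 + s₂E₃₂, S₃ = 1 + s₃E₁₂, S₄ = 1 + s₄E₁₃, S₅ = 1 + s₅E₂₃, S₆ = 1 + s₆E₂₁, S₇ = 1 + s₇E₃₁, S₈ = 1 + s₈E₃₂, S₉ = 1 + s₉E₁₂, S₁₀ = 1 + s₁₀E₁₃, where E_{ij} is the 3×3 matrix with a single 1 in position (i,j) and zeros elsewhere. Then there exist s₁, …, s₁₀ ∈ ℂ with h(τ)·S₁₀·S₉·S₈·S₇·S₆·S₅·S₄·S₃·S₂·S₁ = 1 (the identity matrix) if and only if τ = 1. (That is, the Betti moduli space M_B(⟨z^{5/3}⟩, τ) is nonempty if and only if τ = 1.) -/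
/-!
The Stokes factors are transvections, so they have determinant one, whereas `det h(τ) = τ`;
taking determinants of `h(τ) · S₁₀ ⋯ S₁ = 1` forces `τ = 1`. Conversely, for `τ = 1` the
Stokes data `s = (1, 0, 1, 0, 1, -1, 0, -1, 0, -1)` solve the equation.
-/

open Matrix

theorem Matrix.det_one_add_single_of_ne {n R : Type*} [Fintype n] [DecidableEq n] [CommRing R]
    {i j : n} (h : i ≠ j) (c : R) : (1 + single i j c).det = 1 :=
  det_transvection_of_ne i j h c

theorem Matrix.one_add_single_fin_three {R : Type*} [Semiring R] (i j : Fin 3) (c : R) :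
    (1 + single i j c : Matrix (Fin 3) (Fin 3) R) =
      !![1 + single i j c 0 0, single i j c 0 1, single i j c 0 2;
        single i j c 1 0, 1 + single i j c 1 1, single i j c 1 2;
        single i j c 2 0, single i j c 2 1, 1 + single i j c 2 2] := by
  ext a b
  fin_cases a <;> fin_cases b <;> simp

theorem mB_five_thirds_nonempty_iff_general
    (τ : ℂ) :
    (∃ s₁ s₂ s₃ s₄ s₅ s₆ s₇ s₈ s₉ s₁₀ : ℂ,
      (!![0, 0, τ; 1, 0, 0; 0, 1, 0] : Matrix (Fin 3) (Fin 3) ℂ) *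
        (1 + Matrix.single 0 2 s₁₀) *
        (1 + Matrix.single 0 1 s₉) *
        (1 + Matrix.single 2 1 s₈) *
        (1 + Matrix.single 2 0 s₇) *
        (1 + Matrix.single 1 0 s₆) *
        (1 + Matrix.single 1 2 s₅) *
        (1 + Matrix.single 0 2 s₄) *
        (1 + Matrix.single 0 1 s₃) *
        (1 + Matrix.single 2 1 s₂) *
        (1 + Matrix.single 2 0 s₁) = 1) ↔ τ = 1 := by
  constructor
  · rintro ⟨s₁, s₂, s₃, s₄, s₅, s₆, s₇, s₈, s₉, s₁₀, hprod⟩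
    have hdet := congrArg det hprod
    simp (disch := decide) only [det_mul, det_one_add_single_of_ne, mul_one, det_one] at hdet
    simpa [det_fin_three] using hdet
  · rintro rfl
    refine ⟨1, 0, 1, 0, 1, -1, 0, -1, 0, -1, ?_⟩
    simp only [one_add_single_fin_three]
    simp [one_fin_three]

/-- the Betti moduli space `M_B(⟨z^{5/3}⟩, τ)` is nonempty iff `τ = 1`: there
exist ten unipotent Stokes matrices `Sᵢ = 1 + sᵢ E_{jᵢ kᵢ}` with
`h(τ)·S₁₀·S₉·S₈·S₇·S₆·S₅·S₄·S₃·S₂·S₁ = 1`, where `h(τ) = !![0,0,τ; 1,0,0; 0,1,0]`,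
if and only if `τ = 1`. -/
theorem mB_five_thirds_nonempty_iff
    (τ : ℂ) (hτ : τ ≠ 0) :
    (∃ s₁ s₂ s₃ s₄ s₅ s₆ s₇ s₈ s₉ s₁₀ : ℂ,
      (!![0, 0, τ; 1, 0, 0; 0, 1, 0] : Matrix (Fin 3) (Fin 3) ℂ) *
        (1 + Matrix.single 0 2 s₁₀) *
        (1 + Matrix.single 0 1 s₉) *
        (1 + Matrix.single 2 1 s₈) *
        (1 + Matrix.single 2 0 s₇) *
        (1 + Matrix.single 1 0 s₆) *
        (1 + Matrix.single 1 2 s₅) *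
        (1 + Matrix.single 0 2 s₄) *
        (1 + Matrix.single 0 1 s₃) *
        (1 + Matrix.single 2 1 s₂) *
        (1 + Matrix.single 2 0 s₁) = 1) ↔ τ = 1 :=
  mB_five_thirds_nonempty_iff_general τ
end

section
/- Let τ̂ be a nonzero complex number and let ĥ(τ̂) be the 2×2 complex matrix !![0, τ̂; −1, 0]. For t₁, …, t₅ ∈ ℂ let Ŝ₁ = !![1, 0; t₁, 1], Ŝ₂ = !![1, t₂; 0, 1], Ŝ₃ = !![1, 0; t₃, 1], Ŝ₄ = !![1, t₄; 0, 1], Ŝ₅ = !![1, 0; t₅, 1]. Then there exist t₁, …, t₅ ∈ ℂ with ĥ(τ̂)·Ŝ₅·Ŝ₄·Ŝ₃·Ŝ₂·Ŝ₁ = 1 (the identity matrix) if and only if τ̂ = 1. (That is, the Betti moduli space M_B(⟨w^{5/2}⟩, τ̂) is nonempty if and only if τ̂ = 1.) -/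
open Matrix

/-- the Betti moduli space `M_B(⟨w^{5/2}⟩, τ̂)` is nonempty iff `τ̂ = 1`: there
exist five unipotent Stokes matrices `Ŝ₁ = !![1,0;t₁,1]`, `Ŝ₂ = !![1,t₂;0,1]`,
`Ŝ₃ = !![1,0;t₃,1]`, `Ŝ₄ = !![1,t₄;0,1]`, `Ŝ₅ = !![1,0;t₅,1]` with
`ĥ(τ̂)·Ŝ₅·Ŝ₄·Ŝ₃·Ŝ₂·Ŝ₁ = 1`, where `ĥ(τ̂) = !![0, τ̂; −1, 0]`, if and only if `τ̂ = 1`. -/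
theorem mB_five_halves_nonempty_iff
    (τ : ℂ) (hτ : τ ≠ 0) :
    (∃ t₁ t₂ t₃ t₄ t₅ : ℂ,
      (!![0, τ; -1, 0] : Matrix (Fin 2) (Fin 2) ℂ) *
        !![1, 0; t₅, 1] * !![1, t₄; 0, 1] * !![1, 0; t₃, 1] *
        !![1, t₂; 0, 1] * !![1, 0; t₁, 1] = 1) ↔ τ = 1 := by
  constructor
  · rintro ⟨t₁, t₂, t₃, t₄, t₅, h⟩
    have hd := congrArg Matrix.det h
    simp only [Matrix.det_mul, Matrix.det_fin_two_of, Matrix.det_one] at hd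
    linear_combination hd
  · rintro rfl
    refine ⟨-3, 1, -2, 2, -1, ?_⟩
    ext i j
    fin_cases i <;> fin_cases j <;>
      simp [Matrix.mul_apply, Fin.sum_univ_succ, Matrix.one_apply] <;> ring
end

section
/- Let s₁, …, s₁₀ ∈ ℂ and consider the 3×3 complex matrices h = !![0,0,1; 1,0,0; 0,1,0], S₁ = 1+s₁E₃₁, S₂ = 1+s₂E₃₂, S₃ = 1+s₃E₁₂, S₄ = 1+s₄E₁₃, S₅ = 1+s₅E₂₃, S₆ = 1+s₆E₂₁, S₇ = 1+s₇E₃₁, S₈ = 1+s₈E₃₂, S₉ = 1+s₉E₁₂, S₁₀ = 1+s₁₀E₁₃ (E_{ij} the elementary matrix with 1 in position (i,j)). Suppose h·S₁₀·S₉·S₈·S₇·S₆·S₅·S₄·S₃·S₂·S₁ = 1. Define t₁ = −s₆, t₂ = −s₉, t₃ = s₇, t₄ = −s₅, t₅ = −s₈, and the 2×2 complex matrices ĥ = !![0,1;−1,0], Ŝ₁ = !![1,0;t₁,1], Ŝ₂ = !![1,t₂;0,1], Ŝ₃ = !![1,0;t₃,1], Ŝ₄ = !![1,t₄;0,1], Ŝ₅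 = !![1,0;t₅,1]. Then ĥ·Ŝ₅·Ŝ₄·Ŝ₃·Ŝ₂·Ŝ₁ = 1. (That is, the Fourier transform rule t₁=−s₆, t₂=−s₉, t₃=s₇, t₄=−s₅, t₅=−s₈ maps points of M_B(⟨z^{5/3}⟩, 1) to points of M_B(⟨w^{5/2}⟩, 1).) -/
/-!
Group the Stokes factors as `h · S₁₀ · (S₉S₈S₇) · (S₆S₅S₄) · (S₃S₂S₁) = 1`. Both triple products
are unipotent with explicit inverses, so the middle product `(S₉S₈S₇)(S₆S₅S₄)` equals
`(h S₁₀)⁻¹ (S₃S₂S₁)⁻¹`. The third column and the `(3,1)` entry of that matrix do not involve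
`s₁, s₂, s₃, s₁₀`, which yields four polynomial relations among `s₄, …, s₉`. On the other side,
`ĥ Ŝ₅ Ŝ₄ Ŝ₃ Ŝ₂ Ŝ₁ = 1` holds as soon as `Ŝ₅ Ŝ₄ Ŝ₃ = ĥ⁻¹ Ŝ₁⁻¹ Ŝ₂⁻¹`, i.e. four polynomial identities
in the `tᵢ`, and under the Fourier substitution these are consequences of the relations above.
-/

open Matrix

theorem eq_mul_of_mul_mul_eq_one {M : Type*} [Monoid M] {x x' l y y' : M} (hx : x' * x = 1)
    (hy : y * y' = 1) (h : x * l * y = 1) : l = x' * y' :=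
  calc l = x' * x * l * (y * y') := by rw [hx, hy, one_mul, mul_one]
    _ = x' * (x * l * y) * y' := by simp only [mul_assoc]
    _ = x' * y' := by rw [h, mul_one]

section StokesMatrices

variable {R : Type*} [CommRing R]

-- The names `Eᵢⱼ` index rows and columns from 1 as in the paper, so `Eᵢⱼ` is `single (i-1) (j-1)`.
theorem stokes_E12_E32_E31 (a b c : R) :
    (1 + single 0 1 a) * (1 + single 2 1 b) * (1 + single 2 0 c) =
      !![1, a, 0; 0, 1, 0; c, b, 1] := by
  ext i j
  fin_cases i <;> fin_cases j <;> simp [mul_apply, Fin.sum_univ_three, single_apply, one_apply]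

theorem stokes_E21_E23_E13 (a b c : R) :
    (1 + single 1 0 a) * (1 + single 1 2 b) * (1 + single 0 2 c) =
      !![1, 0, c; a, 1, b + a * c; 0, 0, 1] := by
  ext i j
  fin_cases i <;> fin_cases j <;> simp [mul_apply, Fin.sum_univ_three, single_apply, one_apply]
  ring

theorem stokes_E12_E32_E31_mul_inverse (a b c : R) :
    !![1, a, 0; 0, 1, 0; c, b, 1] * !![1, -a, 0; 0, 1, 0; -c, a * c - b, 1] = 1 := by
  simp [one_fin_three, mul_comm]

theorem inverse_mul_monodromy_mul_stokes_E13 (a : R) :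
    !![-a, 1, 0; 0, 0, 1; 1, 0, 0] * (!![0, 0, 1; 1, 0, 0; 0, 1, 0] * (1 + single 0 2 a)) = 1 := by
  ext i j
  fin_cases i <;> fin_cases j <;>
    simp [mul_apply, Fin.sum_univ_three, single_apply, one_apply, vecMul, dotProduct]

theorem middle_stokes_of_betti_five_thirds {s₁ s₂ s₃ s₄ s₅ s₆ s₇ s₈ s₉ s₁₀ : R}
    (h : (!![0, 0, 1; 1, 0, 0; 0, 1, 0] : Matrix (Fin 3) (Fin 3) R) *
        (1 + single 0 2 s₁₀) * (1 + single 0 1 s₉) * (1 + single 2 1 s₈) *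
        (1 + single 2 0 s₇) * (1 + single 1 0 s₆) * (1 + single 1 2 s₅) *
        (1 + single 0 2 s₄) * (1 + single 0 1 s₃) * (1 + single 2 1 s₂) *
        (1 + single 2 0 s₁) = 1) :
    !![1, s₉, 0; 0, 1, 0; s₇, s₈, 1] * !![1, 0, s₄; s₆, 1, s₅ + s₆ * s₄; 0, 0, 1] =
      !![-s₁₀, 1 + s₃ * s₁₀, 0; -s₁, s₁ * s₃ - s₂, 1; 1, -s₃, 0] := by
  refine (eq_mul_of_mul_mul_eq_one (inverse_mul_monodromy_mul_stokes_E13 s₁₀)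
    (stokes_E12_E32_E31_mul_inverse s₃ s₂ s₁) ?_).trans ?_
  · rw [← stokes_E12_E32_E31, ← stokes_E12_E32_E31, ← stokes_E21_E23_E13]
    simpa only [Matrix.mul_assoc] using h
  · rw [mul_fin_three]
    ring_nf

theorem relations_of_betti_five_thirds {s₁ s₂ s₃ s₄ s₅ s₆ s₇ s₈ s₉ s₁₀ : R}
    (h : (!![0, 0, 1; 1, 0, 0; 0, 1, 0] : Matrix (Fin 3) (Fin 3) R) *
        (1 + single 0 2 s₁₀) * (1 + single 0 1 s₉) * (1 + single 2 1 s₈) *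
        (1 + single 2 0 s₇) * (1 + single 1 0 s₆) * (1 + single 1 2 s₅) *
        (1 + single 0 2 s₄) * (1 + single 0 1 s₃) * (1 + single 2 1 s₂) *
        (1 + single 2 0 s₁) = 1) :
    s₅ + s₆ * s₄ = 1 ∧ s₉ = -s₄ ∧ s₄ * s₇ + s₈ = -1 ∧ s₇ + s₆ * s₈ = 1 := by
  have middle := middle_stokes_of_betti_five_thirds h
  have e₀₂ : s₄ + s₉ * (s₅ + s₆ * s₄) = 0 := by
    simpa [mul_fin_three] using congrFun₂ middle 0 2
  have e₁₂ : s₅ + s₆ * s₄ = 1 := by simpa [mul_fin_three] using congrFun₂ middle 1 2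
  have e₂₀ : s₇ + s₈ * s₆ = 1 := by simpa [mul_fin_three] using congrFun₂ middle 2 0
  have e₂₂ : s₇ * s₄ + (s₈ * (s₅ + s₆ * s₄) + 1) = 0 := by
    simpa [mul_fin_three] using congrFun₂ middle 2 2
  exact ⟨e₁₂, by linear_combination e₀₂ - s₉ * e₁₂, by linear_combination e₂₂ - s₈ * e₁₂,
    by linear_combination e₂₀⟩

theorem stokes_fin_two_eq_one_of_relations (t₁ t₂ t₃ t₄ t₅ : R) (h₁ : 1 + t₃ * t₄ = t₁)
    (h₂ : t₄ = -1 - t₁ * t₂) (h₃ : t₅ + t₃ + t₃ * t₄ * t₅ = 1) (h₄ : 1 + t₄ * t₅ = -t₂) :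
    !![0, 1; -1, 0] * !![1, 0; t₅, 1] * !![1, t₄; 0, 1] * !![1, 0; t₃, 1] *
      !![1, t₂; 0, 1] * !![1, 0; t₁, 1] = (1 : Matrix (Fin 2) (Fin 2) R) := by
  have middle : !![1, 0; t₅, 1] * !![1, t₄; 0, 1] * !![1, 0; t₃, 1] =
      !![t₁, -1 - t₁ * t₂; 1, -t₂] := by
    simp only [mul_fin_two, mul_one, mul_zero, add_zero, zero_add, one_mul,
      EmbeddingLike.apply_eq_iff_eq, vecCons_inj, and_true]
    exact ⟨⟨by linear_combination h₁, h₂⟩, by linear_combination h₃, by linear_combination h₄⟩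
  calc _ = !![0, 1; -1, 0] * (!![1, 0; t₅, 1] * !![1, t₄; 0, 1] * !![1, 0; t₃, 1]) *
        !![1, t₂; 0, 1] * !![1, 0; t₁, 1] := by simp only [Matrix.mul_assoc]
    _ = 1 := by
      rw [middle]
      simp [one_fin_two]

end StokesMatrices

/-- the Fourier transform rule `t₁ = −s₆`, `t₂ = −s₉`, `t₃ = s₇`, `t₄ = −s₅`,
`t₅ = −s₈` maps points of the Betti moduli space `M_B(⟨z^{5/3}⟩, 1)` to points of
`M_B(⟨w^{5/2}⟩, 1)`. -/
theorem fourier_five_thirds_to_five_halves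
    (s₁ s₂ s₃ s₄ s₅ s₆ s₇ s₈ s₉ s₁₀ : ℂ)
    (h : (!![0, 0, 1; 1, 0, 0; 0, 1, 0] : Matrix (Fin 3) (Fin 3) ℂ) *
        (1 + Matrix.single 0 2 s₁₀) *
        (1 + Matrix.single 0 1 s₉) *
        (1 + Matrix.single 2 1 s₈) *
        (1 + Matrix.single 2 0 s₇) *
        (1 + Matrix.single 1 0 s₆) *
        (1 + Matrix.single 1 2 s₅) *
        (1 + Matrix.single 0 2 s₄) *
        (1 + Matrix.single 0 1 s₃) *
        (1 + Matrix.single 2 1 s₂) *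
        (1 + Matrix.single 2 0 s₁) = 1) :
    (!![0, 1; -1, 0] : Matrix (Fin 2) (Fin 2) ℂ) *
        !![1, 0; -s₈, 1] * !![1, -s₅; 0, 1] * !![1, 0; s₇, 1] *
        !![1, -s₉; 0, 1] * !![1, 0; -s₆, 1] = 1 := by
  obtain ⟨h₅, h₉, h₈, h₇⟩ := relations_of_betti_five_thirds h
  apply stokes_fin_two_eq_one_of_relations
  · linear_combination -s₇ * h₅ + s₆ * h₈ - h₇
  · linear_combination -h₅ + s₆ * h₉
  · linear_combination s₇ * s₈ * h₅ - s₄ * s₇ * h₇ + (s₇ - 1) * h₈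
  · linear_combination s₈ * h₅ - s₄ * h₇ + h₈ - h₉
end

section
/- The map Φ : ℂ¹⁰ → ℂ⁵ sending (s₁, …, s₁₀) to (t₁, t₂, t₃, t₄, t₅) = (−s₆, −s₉, s₇, −s₅, −s₈) restricts to a bijection from {(s₁,…,s₁₀) ∈ ℂ¹⁰ | h·S₁₀·S₉·S₈·S₇·S₆·S₅·S₄·S₃·S₂·S₁ = 1} onto {(t₁,…,t₅) ∈ ℂ⁵ | ĥ·Ŝ₅·Ŝ₄·Ŝ₃·Ŝ₂·Ŝ₁ = 1}, where h = !![0,0,1; 1,0,0; 0,1,0], S₁ = 1+s₁E₃₁, S₂ = 1+s₂E₃₂, S₃ = 1+s₃E₁₂, S₄ = 1+s₄E₁₃, S₅ = 1+s₅E₂₃, S₆ = 1+s₆E₂₁, S₇ = 1+s₇E₃₁, S₈ = 1+s₈E₃₂, S₉ = 1+s₉E₁₂, S₁₀ = 1+s₁₀E₁₃, and ĥ = !![0,1;−1,0], Ŝ₁ = !![1,0;t₁,1], Ŝ₂ = !![1,t₂;0,1], Ŝ₃ = !![1,0;t₃,1], Ŝ₄ = !![1,t₄;0,1], Ŝ₅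 = !![1,0;t₅,1]. (This is the isomorphism M_B(⟨z^{5/3}⟩, 1) ≅ M_B(⟨w^{5/2}⟩, 1) induced by the Fourier transform.) -/
open Matrix

/-- The Betti moduli space `M_B(⟨z^{5/3}⟩, 1)`, as the set of tuples `(s₁,…,s₁₀) ∈ ℂ¹⁰`
(indexed by `Fin 10`) such that the ten unipotent Stokes matrices and the formal monodromy
`h = !![0,0,1; 1,0,0; 0,1,0]` satisfy `h·S₁₀·⋯·S₁ = 1`. -/
def mBFiveThirds : Set (Fin 10 → ℂ) :=
  {s | (!![0, 0, 1; 1, 0, 0; 0, 1, 0] : Matrix (Fin 3) (Fin 3) ℂ) *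
        (1 + Matrix.single 0 2 (s 9)) *
        (1 + Matrix.single 0 1 (s 8)) *
        (1 + Matrix.single 2 1 (s 7)) *
        (1 + Matrix.single 2 0 (s 6)) *
        (1 + Matrix.single 1 0 (s 5)) *
        (1 + Matrix.single 1 2 (s 4)) *
        (1 + Matrix.single 0 2 (s 3)) *
        (1 + Matrix.single 0 1 (s 2)) *
        (1 + Matrix.single 2 1 (s 1)) *
        (1 + Matrix.single 2 0 (s 0)) = 1}

/-- The Betti moduli space `M_B(⟨w^{5/2}⟩, 1)`, as the set of tuples `(t₁,…,t₅) ∈ ℂ⁵`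
(indexed by `Fin 5`) such that the five unipotent Stokes matrices and the formal monodromy
`ĥ = !![0,1;−1,0]` satisfy `ĥ·Ŝ₅·Ŝ₄·Ŝ₃·Ŝ₂·Ŝ₁ = 1`. -/
def mBFiveHalves : Set (Fin 5 → ℂ) :=
  {t | (!![0, 1; -1, 0] : Matrix (Fin 2) (Fin 2) ℂ) *
        !![1, 0; t 4, 1] * !![1, t 3; 0, 1] * !![1, 0; t 2, 1] *
        !![1, t 1; 0, 1] * !![1, 0; t 0, 1] = 1}

/-- The map induced by the Fourier transform:
`(s₁,…,s₁₀) ↦ (t₁,t₂,t₃,t₄,t₅) = (−s₆, −s₉, s₇, −s₅, −s₈)`. -/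
def fourierMap (s : Fin 10 → ℂ) : Fin 5 → ℂ :=
  ![-s 5, -s 8, s 6, -s 4, -s 7]

/-!
Solving the monodromy relation entry by entry expresses every Stokes multiplier of either space
as a polynomial in three of them, `(x, y, z) = (t₁, t₂, t₅) = (-s₆, -s₉, -s₈)`, and the only
relation left is the cubic `z - y + xyz = 1`. So both moduli spaces are graphs over the same
affine cubic surface, and the Fourier map carries one parametrisation to the other.
-/

namespace Matrix

variable {R : Type*}

lemma one_add_single_fin_three_s11 [AddZeroClass R] [One R] (i j : Fin 3) (c : R) :
    1 + single i j c = !![1 + single i j c 0 0, single i j c 0 1, single i j c 0 2;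
      single i j c 1 0, 1 + single i j c 1 1, single i j c 1 2;
      single i j c 2 0, single i j c 2 1, 1 + single i j c 2 2] := by
  rw [eta_fin_three (1 + single i j c)]
  simp

variable [Zero R] [One R]

lemma of_fin_three_eq_one_iff {a b c d e f g h i : R} :
    !![a, b, c; d, e, f; g, h, i] = 1 ↔
      a = 1 ∧ b = 0 ∧ c = 0 ∧ d = 0 ∧ e = 1 ∧ f = 0 ∧ g = 0 ∧ h = 0 ∧ i = 1 := by
  simp [one_fin_three, vecCons_inj, and_assoc]

lemma of_fin_two_eq_one_iff {a b c d : R} :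
    !![a, b; c, d] = 1 ↔ a = 1 ∧ b = 0 ∧ c = 0 ∧ d = 1 := by
  simp [one_fin_two, vecCons_inj, and_assoc]

end Matrix

def cubicSurface : Set (ℂ × ℂ × ℂ) := {(x, y, z) | z - y + x * y * z = 1}

def fiveThirdsParam : ℂ × ℂ × ℂ → Fin 10 → ℂ
  | (x, y, z) => ![x, x * z - 1, z, y, 1 + x * y, -x, 1 - x * z, -z, -y, -1 - x * y]

def fiveHalvesParam : ℂ × ℂ × ℂ → Fin 5 → ℂ
  | (x, y, z) => ![x, y, 1 - x * z, -1 - x * y, z]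

lemma mBFiveThirds_eq_image : mBFiveThirds = fiveThirdsParam '' cubicSurface := by
  ext s
  simp only [mBFiveThirds, Set.mem_ofPred_eq, one_add_single_fin_three_s11, single_apply, Fin.reduceEq,
    and_self, and_false, false_and, if_true, if_false, add_zero]
  simp only [mul_fin_three, zero_mul, mul_zero, one_mul, mul_one, add_zero, zero_add,
    of_fin_three_eq_one_iff]
  constructor
  · intro hentries
    refine ⟨(-s 5, -s 8, -s 7), ?_, ?_⟩
    · show -s 7 - -s 8 + -s 5 * -s 8 * -s 7 = 1
      grind
    · ext k
      fin_cases k <;> simp [fiveThirdsParam] <;> grind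
  · rintro ⟨⟨x, y, z⟩, hxyz, rfl⟩
    change z - y + x * y * z = 1 at hxyz
    simp only [fiveThirdsParam, cons_val]
    refine ⟨?_, ?_, ?_, ?_, ?_, ?_, ?_, ?_, ?_⟩ <;> grind

lemma mBFiveHalves_eq_image : mBFiveHalves = fiveHalvesParam '' cubicSurface := by
  ext t
  simp only [mBFiveHalves, Set.mem_ofPred_eq, mul_fin_two, of_fin_two_eq_one_iff]
  constructor
  · intro hentries
    refine ⟨(t 0, t 1, t 4), ?_, ?_⟩
    · show t 4 - t 1 + t 0 * t 1 * t 4 = 1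
      grind
    · ext k
      fin_cases k <;> simp [fiveHalvesParam] <;> grind
  · rintro ⟨⟨x, y, z⟩, hxyz, rfl⟩
    change z - y + x * y * z = 1 at hxyz
    simp only [fiveHalvesParam, cons_val]
    refine ⟨?_, ?_, ?_, ?_⟩ <;> grind

lemma fourierMap_comp_fiveThirdsParam : fourierMap ∘ fiveThirdsParam = fiveHalvesParam := by
  ext ⟨x, y, z⟩ k
  fin_cases k <;> simp [fourierMap, fiveThirdsParam, fiveHalvesParam]
  ring

lemma fiveHalvesParam_injective : Function.Injective fiveHalvesParam := by
  rintro ⟨x, y, z⟩ ⟨x', y', z'⟩ h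
  have hx := congrFun h 0
  have hy := congrFun h 1
  have hz := congrFun h 4
  simp only [fiveHalvesParam, cons_val] at hx hy hz
  rw [hx, hy, hz]

/-- the Fourier transform rule `(s₁,…,s₁₀) ↦ (−s₆, −s₉, s₇, −s₅, −s₈)`
restricts to a bijection from `M_B(⟨z^{5/3}⟩, 1)` onto `M_B(⟨w^{5/2}⟩, 1)`. -/
theorem fourier_bijOn : Set.BijOn fourierMap mBFiveThirds mBFiveHalves := by
  have hinj : Set.InjOn fourierMap mBFiveThirds := by
    rw [mBFiveThirds_eq_image]
    exact .image_of_comp (fourierMap_comp_fiveThirdsParam ▸ fiveHalvesParam_injective.injOn)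
  have himage : fourierMap '' mBFiveThirds = mBFiveHalves := by
    rw [mBFiveThirds_eq_image, mBFiveHalves_eq_image, ← Set.image_comp,
      fourierMap_comp_fiveThirdsParam]
  exact himage ▸ hinj.bijOn_image
end
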